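/- Under the setup of the renormalized energy on a genus-zero closed surface: for any admissible configuration (a,d) ∈ 𝒜ⁿ and any index j, the gradient of the renormalized energy with respect to a_j satisfies ∇_{a_j} W(a,d) = 2π d_j (∇S_j(a_j) + 2π d_j ∇H(a_j, a_j)), where S_j := ⋆Ψ(a,d) − 2π d_j G(·, a_j) = 2π Σ_{k≠j} d_k G(·, a_k) + ψ₀ is the regular part of ⋆Ψ near a_j. -/

import Mathlib

/-!
Moving only the `j`-th point to `x`, the energy splits as
`2π d_j S_j(x) + 2π² d_j² H(x,x)` plus the energy of the configuration with the `j`-th charge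
set to zero, which does not depend on `x`; the pair terms containing `j` in either slot are
collected into `S_j` using the symmetry of `G`. By the symmetry of `H`, the derivative of
`x ↦ H(x,x)` at `a_j` is twice that of `x ↦ H(x, a_j)`, which produces the factor `2π d_j` in
front of `∇H`.
-/

open Set Function Finset
open scoped Real

section PairSums

variable {ι α R : Type*} [Fintype ι]

theorem Finset.sum_filter_ne_eq_add [LinearOrder ι] [AddCommMonoid R] (j : ι) (g : ι → R) :
    ∑ k ∈ univ.filter (· ≠ j), g k
      = ∑ k ∈ univ.filter (j < ·), g k + ∑ k ∈ univ.filter (· < j), g k := by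
  rw [sum_filter, sum_filter, sum_filter, ← sum_add_distrib]
  refine sum_congr rfl fun k _ => ?_
  rcases lt_trichotomy j k with h | rfl | h
  · simp [h, h.ne', h.not_gt]
  · simp
  · simp [h, h.ne, h.not_gt]

theorem sum_pairs_update [LinearOrder ι] [CommSemiring R] (F : α → α → R) (w : ι → R)
    (b : ι → α) (j : ι) (x : α) (hF : ∀ k ≠ j, F (b k) x = F x (b k)) :
    ∑ p, ∑ q ∈ univ.filter (p < ·), w p * w q * F (update b j x p) (update b j x q)
      = w j * ∑ k ∈ univ.filter (· ≠ j), w k * F x (b k)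
        + ∑ p, ∑ q ∈ univ.filter (p < ·),
            update w j 0 p * update w j 0 q * F (b p) (b q) := by
  have key : ∀ p, ∀ q ∈ univ.filter (p < ·),
      w p * w q * F (update b j x p) (update b j x q)
        = ((if p = j then w j * (w q * F x (b q)) else 0)
          + (if q = j then w j * (w p * F x (b p)) else 0))
          + update w j 0 p * update w j 0 q * F (b p) (b q) := by
    intro p q hpq
    have hpq : p < q := by simpa using hpq
    rcases eq_or_ne p j with rfl | hp
    · simp [hpq.ne', mul_assoc]
    rcases eq_or_ne q j with rfl | hq
    · simp [hp, hF p hp]; ring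
    · simp [hp, hq]
  rw [sum_congr rfl fun p _ => sum_congr rfl (key p)]
  simp only [sum_add_distrib]
  simp [sum_filter_ne_eq_add, mul_add, mul_sum, ← sum_filter]

theorem Finset.sum_apply_update [DecidableEq ι] [AddCommMonoid R] (f : ι → α → R) (b : ι → α)
    (j : ι) (x : α) :
    ∑ p, f p (update b j x p) = f j x + ∑ p ∈ univ.erase j, f p (b p) := by
  simp_rw [apply_update f b j x]
  rw [sum_update_of_mem (mem_univ j), sdiff_singleton_eq_erase]

end PairSums

section Calculus

variable {𝕜 E F : Type*} [NontriviallyNormedField 𝕜] [NormedAddCommGroup E] [NormedSpace 𝕜 E]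
  [NormedAddCommGroup F] [NormedSpace 𝕜 F] {H : E × E → F} {s : Set E} {y : E}

theorem HasFDerivWithinAt.diag_of_symm (hH : DifferentiableWithinAt 𝕜 H (s ×ˢ s) (y, y))
    (hsym : ∀ x ∈ s, H (y, x) = H (x, y)) (hy : y ∈ s) (hs : UniqueDiffWithinAt 𝕜 s y) :
    HasFDerivWithinAt (fun x => H (x, x))
      ((2 : 𝕜) • fderivWithin 𝕜 (fun x => H (x, y)) s y) s y := by
  set Φ := fderivWithin 𝕜 H (s ×ˢ s) (y, y)
  have hΦ : HasFDerivWithinAt H Φ (s ×ˢ s) (y, y) := hH.hasFDerivWithinAt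
  have hleft : HasFDerivWithinAt (fun x => H (x, y)) (Φ.comp (.inl 𝕜 E E)) s y :=
    HasFDerivWithinAt.comp y hΦ ((hasFDerivWithinAt_id y s).prodMk (hasFDerivWithinAt_const y y s))
      fun x hx => ⟨hx, hy⟩
  have hright : HasFDerivWithinAt (fun x => H (x, y)) (Φ.comp (.inr 𝕜 E E)) s y :=
    (HasFDerivWithinAt.comp y hΦ ((hasFDerivWithinAt_const y y s).prodMk (hasFDerivWithinAt_id y s))
      fun x hx => ⟨hy, hx⟩).congr (fun x hx => (hsym x hx).symm) (hsym y hy).symm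
  have hdiag : HasFDerivWithinAt (fun x => H (x, x))
      (Φ.comp ((ContinuousLinearMap.id 𝕜 E).prod (.id 𝕜 E))) s y :=
    HasFDerivWithinAt.comp y hΦ ((hasFDerivWithinAt_id y s).prodMk (hasFDerivWithinAt_id y s))
      fun x hx => ⟨hx, hx⟩
  have hsplit : Φ.comp ((ContinuousLinearMap.id 𝕜 E).prod (.id 𝕜 E))
      = Φ.comp (.inl 𝕜 E E) + Φ.comp (.inr 𝕜 E E) := by
    ext v; simp [← map_add]
  rw [two_smul, hleft.fderivWithin hs]
  rwa [hsplit, hs.eq hright hleft] at hdiag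

theorem DifferentiableOn.differentiableWithinAt_of_ne {f : E → F} {x : E}
    (hf : DifferentiableOn 𝕜 f (s \ {y})) (hx : x ∈ s) (hxy : x ≠ y) :
    DifferentiableWithinAt 𝕜 f s x :=
  (hf x ⟨hx, hxy⟩).congr_nhds (hxy.nhdsWithin_sdiff_singleton s)

end Calculus

section RenormalizedEnergy

variable {α : Type*} {n : ℕ} (G : α → α → ℝ) (H : α × α → ℝ) (ψ₀ : α → ℝ) (c : ℝ)
  (d : Fin n → ℤ)

noncomputable def renormalizedEnergy (b : Fin n → α) : ℝ :=
  4 * π ^ 2 * ∑ j, ∑ k ∈ Finset.univ.filter (fun k => j < k),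
      (d j : ℝ) * (d k : ℝ) * G (b j) (b k)
    + 2 * π * ∑ j, (π * (d j : ℝ) ^ 2 * H (b j, b j) + (d j : ℝ) * ψ₀ (b j))
    + c

theorem renormalizedEnergy_update (b : Fin n → α) (j : Fin n) (x : α)
    (hG : ∀ k ≠ j, G (b k) x = G x (b k)) :
    renormalizedEnergy G H ψ₀ c d (update b j x)
      = 2 * π * d j * (2 * π * ∑ k ∈ univ.filter (· ≠ j), (d k : ℝ) * G x (b k) + ψ₀ x)
        + 2 * π ^ 2 * (d j : ℝ) ^ 2 * H (x, x)
        + renormalizedEnergy G H ψ₀ c (update d j 0) b := by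
  have hcast : ∀ k, ((update d j 0 k : ℤ) : ℝ) = update (fun k => (d k : ℝ)) j 0 k :=
    fun k => by
      rcases eq_or_ne k j with rfl | hk
      · simp
      · simp [hk]
  rw [renormalizedEnergy, renormalizedEnergy, sum_pairs_update G _ b j x hG,
    sum_apply_update (fun p y => π * (d p : ℝ) ^ 2 * H (y, y) + d p * ψ₀ y),
    sum_apply_update (fun p (e : ℤ) => π * (e : ℝ) ^ 2 * H (b p, b p) + e * ψ₀ (b p)) d]
  simp only [hcast]
  push_cast
  ring

end RenormalizedEnergy

theorem stmt_9_general (ℓ n : ℕ)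
    (M : Set (EuclideanSpace ℝ (Fin ℓ)))
    (G : EuclideanSpace ℝ (Fin ℓ) → EuclideanSpace ℝ (Fin ℓ) → ℝ)
    (H : EuclideanSpace ℝ (Fin ℓ) × EuclideanSpace ℝ (Fin ℓ) → ℝ)
    (ψ₀ : EuclideanSpace ℝ (Fin ℓ) → ℝ) (c : ℝ)
    (hGsym : ∀ x ∈ M, ∀ y ∈ M, G x y = G y x)
    (hHsym : ∀ x ∈ M, ∀ y ∈ M, H (x, y) = H (y, x))
    (hHreg : ContDiffOn ℝ 1 H (M ×ˢ M))
    (hψ : ContDiffOn ℝ 1 ψ₀ M)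
    (hGreg : ∀ y ∈ M, ContDiffOn ℝ 1 (fun x => G x y) (M \ {y}))
    -- the admissible configuration (a, d)
    (d : Fin n → ℤ) (a : Fin n → EuclideanSpace ℝ (Fin ℓ))
    (ha : ∀ j, a j ∈ M) (hdist : Function.Injective a)
    -- the renormalized energy
    (W : (Fin n → EuclideanSpace ℝ (Fin ℓ)) → ℝ)
    (hW : ∀ b : Fin n → EuclideanSpace ℝ (Fin ℓ),
      W b = 4 * π ^ 2 * ∑ j, ∑ k ∈ Finset.univ.filter (fun k => j < k),
              (d j : ℝ) * (d k : ℝ) * G (b j) (b k)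
          + 2 * π * ∑ j, (π * (d j : ℝ) ^ 2 * H (b j, b j) + (d j : ℝ) * ψ₀ (b j))
          + c)
    (j : Fin n) (hud : UniqueDiffWithinAt ℝ M (a j)) :
    fderivWithin ℝ (fun x => W (Function.update a j x)) M (a j)
      = (2 * π * (d j : ℝ)) •
          (fderivWithin ℝ
              (fun x => 2 * π * ∑ k ∈ Finset.univ.filter (fun k => k ≠ j),
                  (d k : ℝ) * G x (a k) + ψ₀ x) M (a j)
            + (2 * π * (d j : ℝ)) •
                fderivWithin ℝ (fun x => H (x, a j)) M (a j)) := by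
  set S := fun x => 2 * π * ∑ k ∈ Finset.univ.filter (fun k => k ≠ j), (d k : ℝ) * G x (a k)
    + ψ₀ x
  have hWS : EqOn (fun x => W (update a j x))
      (fun x => 2 * π * d j * S x + 2 * π ^ 2 * (d j : ℝ) ^ 2 * H (x, x)
        + renormalizedEnergy G H ψ₀ c (update d j 0) a) M := fun x hx =>
    (hW _).trans (renormalizedEnergy_update G H ψ₀ c d a j x fun k _ => hGsym _ (ha k) x hx)
  have hS : DifferentiableWithinAt ℝ S M (a j) := by
    refine ((DifferentiableWithinAt.fun_sum fun k hk => ?_).const_mul _).add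
      ((hψ.differentiableOn one_ne_zero) _ (ha j))
    refine DifferentiableWithinAt.const_mul ?_ _
    exact ((hGreg _ (ha k)).differentiableOn one_ne_zero).differentiableWithinAt_of_ne (ha j)
      fun h => (mem_filter.1 hk).2 (hdist h).symm
  have hdiag := HasFDerivWithinAt.diag_of_symm ((hHreg.differentiableOn one_ne_zero) _ ⟨ha j, ha j⟩)
    (fun x hx => hHsym _ (ha j) x hx) (ha j) hud
  rw [fderivWithin_congr hWS (hWS (ha j)),
    (((hS.hasFDerivWithinAt.const_mul _).fun_add (hdiag.const_mul _)).add_const _).fderivWithin hud]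
  module

/-- For the renormalized energy on a genus-zero closed surface `M`
(embedded in `ℝ^ℓ`), given by
`W(a,d) = 4π² Σ_{j<k} d_j d_k G(a_j,a_k) + 2π Σ_j (π d_j² H(a_j,a_j) + d_j ψ₀(a_j)) + c`
(`G` the Green function with symmetric regular part `H`, `ψ₀` the geometric
potential, `c = (1/2)∫|dψ₀|²`), the gradient with respect to `a_j` satisfies
`∇_{a_j} W(a,d) = 2π d_j (∇S_j(a_j) + 2π d_j ∇H(a_j,a_j))`, where
`S_j = 2π Σ_{k≠j} d_k G(·,a_k) + ψ₀` is the regular part of `⋆Ψ(a,d)` near `a_j`.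
The (tangential) gradients are expressed as derivatives within `M`. -/
theorem stmt_9 (ℓ n : ℕ)
    (M : Set (EuclideanSpace ℝ (Fin ℓ)))
    (G : EuclideanSpace ℝ (Fin ℓ) → EuclideanSpace ℝ (Fin ℓ) → ℝ)
    (H : EuclideanSpace ℝ (Fin ℓ) × EuclideanSpace ℝ (Fin ℓ) → ℝ)
    (ψ₀ : EuclideanSpace ℝ (Fin ℓ) → ℝ) (c : ℝ)
    (hGsym : ∀ x ∈ M, ∀ y ∈ M, G x y = G y x)
    (hHsym : ∀ x ∈ M, ∀ y ∈ M, H (x, y) = H (y, x))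
    (hHreg : ContDiffOn ℝ 1 H (M ×ˢ M))
    (hψ : ContDiffOn ℝ 1 ψ₀ M)
    (hGreg : ∀ y ∈ M, ContDiffOn ℝ 1 (fun x => G x y) (M \ {y}))
    -- the admissible configuration (a, d)
    (d : Fin n → ℤ) (a : Fin n → EuclideanSpace ℝ (Fin ℓ))
    (ha : ∀ j, a j ∈ M) (hdist : Function.Injective a)
    (χ : ℤ) (hχ : ∑ j, d j = χ)
    -- the renormalized energy
    (W : (Fin n → EuclideanSpace ℝ (Fin ℓ)) → ℝ)
    (hW : ∀ b : Fin n → EuclideanSpace ℝ (Fin ℓ),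
      W b = 4 * π ^ 2 * ∑ j, ∑ k ∈ Finset.univ.filter (fun k => j < k),
              (d j : ℝ) * (d k : ℝ) * G (b j) (b k)
          + 2 * π * ∑ j, (π * (d j : ℝ) ^ 2 * H (b j, b j) + (d j : ℝ) * ψ₀ (b j))
          + c)
    (j : Fin n) (hud : UniqueDiffWithinAt ℝ M (a j)) :
    fderivWithin ℝ (fun x => W (Function.update a j x)) M (a j)
      = (2 * π * (d j : ℝ)) •
          (fderivWithin ℝ
              (fun x => 2 * π * ∑ k ∈ Finset.univ.filter (fun k => k ≠ j),
                  (d k : ℝ) * G x (a k) + ψ₀ x) M (a j)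
            + (2 * π * (d j : ℝ)) •
                fderivWithin ℝ (fun x => H (x, a j)) M (a j)) :=
  stmt_9_general ℓ n M G H ψ₀ c hGsym hHsym hHreg hψ hGreg d a ha hdist W hW j hud
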